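/- The number of partitions of n in which no part has multiplicity 1, 2, or 5 equals the number of partitions of n into parts congruent to 0, 3, 4, 6, 8, or 9 modulo 12. -/

import Mathlib

open scoped Classical

/-- Number of partitions of `n` whose part multiplicities all lie in `A`. -/
noncomputable def partP (A : Set ℕ) (n : ℕ) : ℕ :=
  (Finset.univ.filter (fun p : Nat.Partition n =>
    ∀ i ∈ p.parts, Multiset.count i p.parts ∈ A)).card

/-- Number of partitions of `n` whose parts all lie in `B`. -/
noncomputable def partQ (B : Set ℕ) (n : ℕ) : ℕ :=
  (Finset.univ.filter (fun p : Nat.Partition n => ∀ i ∈ p.parts, i ∈ B)).card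

/-!
The allowed multiplicities of a part `b` contribute the factor
`1 + ∑_{k ∉ {1,2,5}} X^{kb} = (1 - X^{12b}) / ((1 - X^{3b}) (1 - X^{4b}))` to the generating
function of the left side, while the parts counted on the right are the `b` with `3 ∣ b` or
`4 ∣ b`. Multiplying both generating functions by `∏_b (1 - X^{3b}) (1 - X^{4b})` gives
`∏_b (1 - X^{12b})` in both cases, on the right by inclusion–exclusion over `3 ∣ b` and `4 ∣ b`
after reindexing the two products over the multiples of `3` and of `4`.
-/

open PowerSeries PowerSeries.WithPiTopology Finset

theorem Set.mulIndicator_union_mul_mulIndicator_mul_mulIndicator {α M : Type*} [CommMonoid M]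
    {s t : Set α} {f g : α → M} {a : α} (h : g a * f a = 1) :
    (s ∪ t).mulIndicator g a * (s.mulIndicator f a * t.mulIndicator f a)
      = (s ∩ t).mulIndicator f a := by
  by_cases hs : a ∈ s <;> by_cases ht : a ∈ t <;>
    simp [hs, ht, ← mul_assoc, h]

theorem hasProd_comp_mul_succ_iff {M : Type*} [CommMonoid M] [TopologicalSpace M] {F : ℕ → M}
    {a : M} {d : ℕ} (hd : 0 < d) :
    HasProd (fun i ↦ F (d * (i + 1))) a ↔
      HasProd (fun i ↦ {b | d ∣ b}.mulIndicator F (i + 1)) a := by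
  have hg : Function.Injective fun i ↦ d * i + (d - 1) := fun i j h ↦ by
    simpa [hd.ne'] using (show d * i = d * j by simp only at h; omega)
  convert hg.hasProd_iff (f := fun i ↦ {b | d ∣ b}.mulIndicator F (i + 1)) (a := a) ?_ using 2
  · ext i
    simp [show d * i + (d - 1) + 1 = d * (i + 1) by grind]
  · rintro x hx
    rw [Set.mulIndicator_of_notMem]
    rintro ⟨_ | k, hk⟩
    · omega
    · exact hx ⟨k, by simp only; rw [Nat.mul_succ] at hk; omega⟩

namespace PowerSeries.WithPiTopology

variable {R : Type*} [CommRing R] [TopologicalSpace R]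

theorem multipliable_one_sub_X_pow_mul_succ {d : ℕ} (hd : 0 < d) :
    Multipliable fun i ↦ (1 : R⟦X⟧) - X ^ (d * (i + 1)) := by
  nontriviality R
  simp_rw [sub_eq_add_neg]
  apply multipliable_one_add_of_tendsto_order_atTop_nhds_top
  have : StrictMono fun i ↦ d * (i + 1) := fun a b h ↦ Nat.mul_lt_mul_of_pos_left (by omega) hd
  simpa [order_neg, order_X_pow, Function.comp_def] using
    ENat.tendsto_natCast_nhds_top.comp this.tendsto_atTop

theorem constantCoeff_eq_one_of_hasProd [T2Space R] {ι : Type*} {f : ι → R⟦X⟧} {a : R⟦X⟧}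
    (hf : HasProd f a) (h : ∀ i, constantCoeff (f i) = 1) : constantCoeff a = 1 := by
  have := hf.map (constantCoeff (R := R)) (continuous_constantCoeff R)
  simp only [Function.comp_def, h] at this
  exact this.unique hasProd_one

variable [IsTopologicalRing R] [T2Space R] {Y : R⟦X⟧}

theorem one_add_tsum_indicator_ne_one_two_five (hY : constantCoeff Y = 0) :
    1 + ∑' j, {t : ℕ | t ≠ 1 ∧ t ≠ 2 ∧ t ≠ 5}.indicator (1 : ℕ → R) (j + 1) • Y ^ (j + 1)
      = ∑' j, Y ^ j - Y - Y ^ 2 - Y ^ 5 := by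
  have hgeom : Summable (Y ^ ·) := summable_pow_of_constantCoeff_eq_zero hY
  have htail : Summable fun j ↦ Y ^ (j + 6) := (summable_nat_add_iff 6).mpr hgeom
  have htail_eq (j : ℕ) :
      {t : ℕ | t ≠ 1 ∧ t ≠ 2 ∧ t ≠ 5}.indicator (1 : ℕ → R) (j + 5 + 1) • Y ^ (j + 5 + 1)
        = Y ^ (j + 6) := by
    rw [Set.indicator_of_mem (by simp only [Set.mem_ofPred_eq]; omega), Pi.one_apply, one_smul]
  have hsum : Summable fun j ↦
      {t : ℕ | t ≠ 1 ∧ t ≠ 2 ∧ t ≠ 5}.indicator (1 : ℕ → R) (j + 1) • Y ^ (j + 1) :=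
    (summable_nat_add_iff 5).mp (by simpa only [htail_eq] using htail)
  rw [← hsum.sum_add_tsum_nat_add 5, ← hgeom.sum_add_tsum_nat_add 6]
  simp only [htail_eq, Finset.sum_range_succ, Finset.sum_range_zero]
  norm_num [Set.indicator_apply]
  ring

theorem one_add_tsum_indicator_ne_one_two_five_mul (hY : constantCoeff Y = 0) :
    (1 + ∑' j, {t : ℕ | t ≠ 1 ∧ t ≠ 2 ∧ t ≠ 5}.indicator (1 : ℕ → R) (j + 1) • Y ^ (j + 1))
      * ((1 - Y ^ 3) * (1 - Y ^ 4)) = 1 - Y ^ 12 := by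
  rw [one_add_tsum_indicator_ne_one_two_five hY]
  linear_combination (1 + Y + Y ^ 2) * (1 - Y ^ 4) *
    tsum_pow_mul_one_sub_of_constantCoeff_eq_zero hY

end PowerSeries.WithPiTopology

section PartitionGenFun

variable {R : Type*} [CommSemiring R] [TopologicalSpace R] [T2Space R]

theorem hasProd_mk_partP (A : Set ℕ) :
    HasProd (fun i ↦ 1 + ∑' j, A.indicator (1 : ℕ → R) (j + 1) • ((X : R⟦X⟧) ^ (i + 1)) ^ (j + 1))
      (PowerSeries.mk fun n ↦ (partP A n : R)) := by
  convert Nat.Partition.hasProd_genFun (fun _ ↦ A.indicator (1 : ℕ → R)) using 1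
  · simp_rw [pow_mul]
  · ext n
    simp only [coeff_mk, Nat.Partition.coeff_genFun, partP, card_filter, Finsupp.prod,
      Set.indicator_apply, Pi.one_apply, prod_boole]
    simp

theorem hasProd_mk_partQ [IsTopologicalSemiring R] (B : Set ℕ) :
    HasProd (fun i ↦ B.mulIndicator (fun b ↦ ∑' j, ((X : R⟦X⟧) ^ b) ^ j) (i + 1))
      (PowerSeries.mk fun n ↦ (partQ B n : R)) := by
  have := Nat.Partition.hasProd_powerSeriesMk_card_restricted R (· ∈ B)
  simp only [pow_mul] at this
  convert this using 2 with i
  · exact Set.mulIndicator_apply ..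
  · rfl

end PartitionGenFun

theorem mk_partP_eq_mk_partQ :
    (PowerSeries.mk fun n ↦ (partP {t : ℕ | t ≠ 1 ∧ t ≠ 2 ∧ t ≠ 5} n : ℤ)) =
      PowerSeries.mk fun n ↦ (partQ ({b : ℕ | 3 ∣ b} ∪ {b | 4 ∣ b}) n : ℤ) := by
  obtain ⟨D3, h3⟩ := multipliable_one_sub_X_pow_mul_succ (R := ℤ) (d := 3) (by norm_num)
  obtain ⟨D4, h4⟩ := multipliable_one_sub_X_pow_mul_succ (R := ℤ) (d := 4) (by norm_num)
  have hD : D3 * D4 ≠ 0 := by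
    have := constantCoeff_eq_one_of_hasProd (h3.mul h4) fun i ↦ by simp
    exact ne_zero_of_map (f := constantCoeff) (by simp [this])
  have hPD : HasProd (fun i ↦ (1 : ℤ⟦X⟧) - X ^ (12 * (i + 1)))
      ((PowerSeries.mk fun n ↦ (partP {t : ℕ | t ≠ 1 ∧ t ≠ 2 ∧ t ≠ 5} n : ℤ)) * (D3 * D4)) := by
    -- `convert!`: the two factors reach `CommMonoid ℤ⟦X⟧` via `CommSemiring` and `CommRing`.
    convert! (hasProd_mk_partP _).mul (h3.mul h4) using 2 with i
    simp only [pow_mul']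
    exact (one_add_tsum_indicator_ne_one_two_five_mul (Y := X ^ (i + 1)) (by simp)).symm
  have h12 : {b : ℕ | 3 ∣ b} ∩ {b | 4 ∣ b} = {b | 12 ∣ b} := by
    ext b
    simp only [Set.mem_inter_iff, Set.mem_ofPred_eq]
    omega
  have hQD : HasProd (fun i ↦ {b | 12 ∣ b}.mulIndicator (fun b ↦ (1 : ℤ⟦X⟧) - X ^ b) (i + 1))
      ((PowerSeries.mk fun n ↦ (partQ ({b : ℕ | 3 ∣ b} ∪ {b | 4 ∣ b}) n : ℤ)) * (D3 * D4)) := by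
    rw [hasProd_comp_mul_succ_iff (F := fun b ↦ (1 : ℤ⟦X⟧) - X ^ b) (by norm_num)] at h3 h4
    convert! (hasProd_mk_partQ _).mul (h3.mul h4) using 2 with i
    rw [← h12, Set.mulIndicator_union_mul_mulIndicator_mul_mulIndicator]
    exact tsum_pow_mul_one_sub_of_constantCoeff_eq_zero (by simp)
  exact mul_right_cancel₀ hD (hPD.unique
    ((hasProd_comp_mul_succ_iff (F := fun b ↦ (1 : ℤ⟦X⟧) - X ^ b) (by norm_num)).mpr hQD))

/-- MacMahon-type example: multiplicities avoiding {1,2,5} vs parts ≡ 0,3,4,6,8,9 mod 12. -/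
theorem macmahon_type_example (n : ℕ) :
    partP {t : ℕ | t ≠ 1 ∧ t ≠ 2 ∧ t ≠ 5} n
      = partQ {b : ℕ | b % 12 = 0 ∨ b % 12 = 3 ∨ b % 12 = 4 ∨ b % 12 = 6 ∨
          b % 12 = 8 ∨ b % 12 = 9} n := by
  have hB : {b : ℕ | b % 12 = 0 ∨ b % 12 = 3 ∨ b % 12 = 4 ∨ b % 12 = 6 ∨ b % 12 = 8 ∨ b % 12 = 9}
      = {b | 3 ∣ b} ∪ {b | 4 ∣ b} := by
    ext b
    simp only [Set.mem_union, Set.mem_ofPred_eq]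
    omega
  rw [hB]
  simpa using congrArg (coeff n) mk_partP_eq_mk_partQ
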